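/- Max-min fairness is fair (sharing incentive): if agent i reports her true demand D_i, then u_i(a_i) >= u_i(e_i) regardless of the other agents' reports, where a_i is her MMF allocation and e_i her entitlement. -/

import Mathlib

/-!
If agent `i`'s water level `λ` is at least `1`, she receives `min (D, λ eᵢ) ≥ min (D, eᵢ)`.
Otherwise the whole allocation sums to at most `λ ∑ eⱼ = λ < 1`, so the supply constraint is
not binding: every demand is met in full and she receives `D`. Either way `aᵢ ≥ min (D, eᵢ)`,
and since `u` is monotone and constant beyond `D`, `u (min (D, eᵢ)) = u eᵢ`.
-/

open Finset

/-- Max-min fairness allocation, characterized as weighted water-filling. -/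
def IsMMF {n : ℕ} (e d a : Fin n → ℝ) : Prop :=
  ∃ lam : ℝ, 0 ≤ lam ∧ (∀ i, a i = min (d i) (lam * e i)) ∧
    (∑ i, a i = min 1 (∑ i, d i))

namespace IsMMF

variable {n : ℕ} {e d a : Fin n → ℝ}

theorem apply_le (h : IsMMF e d a) (i : Fin n) : a i ≤ d i := by
  obtain ⟨lam, -, ha, -⟩ := h
  exact (ha i).trans_le (min_le_left _ _)

theorem eq_of_sum_lt_one (h : IsMMF e d a) (hlt : ∑ j, a j < 1) : a = d := by
  have hsum : ∑ j, a j = ∑ j, d j := by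
    obtain ⟨lam, -, -, hsum⟩ := h
    rw [hsum] at hlt ⊢
    exact min_eq_right ((min_lt_iff.mp hlt).resolve_left (lt_irrefl 1)).le
  funext i
  exact (sum_eq_sum_iff_of_le fun j _ => h.apply_le j).mp hsum i (mem_univ i)

theorem min_le_apply (h : IsMMF e d a) (he : ∀ j, 0 ≤ e j) (hesum : ∑ j, e j = 1)
    (i : Fin n) : min (d i) (e i) ≤ a i := by
  have ⟨lam, _, ha, _⟩ := h
  rcases le_or_gt 1 lam with hlam1 | hlam1
  · rw [ha i]
    exact min_le_min_left _ (le_mul_of_one_le_left (he i) hlam1)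
  · have hsum_le : ∑ j, a j ≤ lam :=
      calc ∑ j, a j ≤ ∑ j, lam * e j := sum_le_sum fun j _ => (ha j).trans_le (min_le_right _ _)
        _ = lam := by rw [← mul_sum, hesum, mul_one]
    rw [h.eq_of_sum_lt_one (hsum_le.trans_lt hlam1)]
    exact min_le_left _ _

end IsMMF

theorem apply_min_eq_of_const_above {α β : Type*} [LinearOrder α] {u : α → β} {D : α}
    (hflat : ∀ x, D < x → u x = u D) (x : α) : u (min D x) = u x := by
  rcases le_or_gt x D with hx | hx
  · rw [min_eq_right hx]
  · rw [min_eq_left hx.le, hflat x hx]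

theorem mmf_fair_general {n : ℕ} (e d : Fin n → ℝ) (i : Fin n) (D : ℝ)
    (he : ∀ j, 0 < e j) (hesum : ∑ j, e j = 1)
    (u : ℝ → ℝ) (hmono : Monotone u)
    (hflat : ∀ x, D < x → u x = u D)
    (a : Fin n → ℝ)
    (hmmf : IsMMF e (Function.update d i D) a) :
    u (e i) ≤ u (a i) := by
  have hle := hmmf.min_le_apply (fun j => (he j).le) hesum i
  rw [Function.update_self] at hle
  calc u (e i) = u (min D (e i)) := (apply_min_eq_of_const_above hflat (e i)).symm
    _ ≤ u (a i) := hmono hle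

/-- Max-min fairness is fair (sharing incentive): if agent `i` reports her true
demand `D`, then regardless of the other agents' reports, the utility of her
allocation is at least the utility of her entitlement. -/
theorem mmf_fair {n : ℕ} (e d : Fin n → ℝ) (i : Fin n) (D : ℝ)
    (he : ∀ j, 0 < e j) (hesum : ∑ j, e j = 1)
    (hd : ∀ j, 0 ≤ d j) (hD : 0 ≤ D)
    (u : ℝ → ℝ) (hmono : Monotone u)
    (hstrict : StrictMonoOn u (Set.Icc 0 D))
    (hflat : ∀ x, D < x → u x = u D)
    (a : Fin n → ℝ)
    (hmmf : IsMMF e (Function.update d i D) a) :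
    u (e i) ≤ u (a i) :=
  mmf_fair_general e d i D he hesum u hmono hflat a hmmf
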